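/- arXiv:2001.00476 — 5 statements merged into one kernel-verified Lean document; each statement's English description precedes it below -/
import Mathlib

section
/- (Condorcet jury theorem, part (a)) Let n be an odd natural number with n ≥ 3, and let X₁,…,Xₙ be i.i.d. Bernoulli random variables with P(Xᵢ = 1) = θ where 1/2 < θ < 1. Then Pₙ = P(∑ Xᵢ > n/2) > θ. -/
open MeasureTheory ProbabilityTheory Finset
open scoped ENNReal

/-!
Group the outcomes by the set `s` of voters who vote correctly; by independence such a pattern
has probability `θ ^ #s * (1 - θ) ^ #sᶜ`. Comparing the majority event with the event that a
fixed voter `i` is correct, patterns lying in both events cancel, and what remains is the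
majorities avoiding `i` against the minorities containing `i`. Since `n` is odd, complementation
is a bijection between these two families, and it makes every minority pattern strictly more
likely because `θ > 1 - θ`. The family is nonempty (it contains `{i}`) because `n ≥ 3`.
-/

section Weights

variable {ι : Type*} [Fintype ι] [DecidableEq ι]

def patternProb (θ : ℝ) (s : Finset ι) : ℝ := θ ^ #s * (1 - θ) ^ #sᶜ

lemma patternProb_nonneg {θ : ℝ} (h₀ : 0 ≤ θ) (h₁ : θ ≤ 1) (s : Finset ι) :
    0 ≤ patternProb θ s := by
  unfold patternProb
  have : 0 ≤ 1 - θ := by linarith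
  positivity

lemma prod_ite_mem_eq_patternProb (θ : ℝ) (s : Finset ι) :
    ∏ i, (if i ∈ s then θ else 1 - θ) = patternProb θ s := by
  rw [prod_ite, prod_const, prod_const, filter_mem_eq_inter, univ_inter, patternProb]
  congr 3
  ext i
  simp

lemma patternProb_lt_patternProb_compl {θ : ℝ} (hθ₁ : 1 / 2 < θ) (hθ₂ : θ < 1)
    {s : Finset ι} (hs : 2 * #s < Fintype.card ι) :
    patternProb θ s < patternProb θ sᶜ := by
  obtain ⟨k, hk⟩ : ∃ k, #sᶜ = #s + (k + 1) :=
    ⟨#sᶜ - #s - 1, by have := card_add_card_compl s; omega⟩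
  have hpos : 0 < θ ^ #s * (1 - θ) ^ #s :=
    mul_pos (pow_pos (by linarith) _) (pow_pos (by linarith) _)
  have hpow : (1 - θ) ^ (k + 1) < θ ^ (k + 1) :=
    pow_lt_pow_left₀ (by linarith) (by linarith) k.succ_ne_zero
  calc patternProb θ s = θ ^ #s * (1 - θ) ^ #s * (1 - θ) ^ (k + 1) := by
        rw [patternProb, hk, pow_add]; ring
    _ < θ ^ #s * (1 - θ) ^ #s * θ ^ (k + 1) := mul_lt_mul_of_pos_left hpow hpos
    _ = patternProb θ sᶜ := by rw [patternProb, compl_compl, hk, pow_add]; ring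

lemma sum_patternProb_mem_lt_sum_patternProb_majority (hodd : Odd (Fintype.card ι))
    (hn : 3 ≤ Fintype.card ι) {θ : ℝ} (hθ₁ : 1 / 2 < θ) (hθ₂ : θ < 1) (i : ι) :
    ∑ s : Finset ι with i ∈ s, patternProb θ s
      < ∑ s : Finset ι with Fintype.card ι < 2 * #s, patternProb θ s := by
  set n := Fintype.card ι
  obtain ⟨m, hm⟩ := hodd
  have hswap : ∑ s : Finset ι with n < 2 * #s ∧ i ∉ s, patternProb θ s
      = ∑ s : Finset ι with i ∈ s ∧ ¬ n < 2 * #s, patternProb θ sᶜ := by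
    refine sum_nbij' compl compl ?_ ?_ (fun s _ => compl_compl s) (fun s _ => compl_compl s)
      (fun s _ => by rw [compl_compl])
    all_goals
      intro s
      simp only [mem_filter, mem_univ, true_and, mem_compl, card_compl, not_not]
    · exact fun ⟨hmaj, hi⟩ => ⟨hi, by omega⟩
    · exact fun ⟨hi, hmin⟩ => ⟨by omega, hi⟩
  have hlt : ∑ s : Finset ι with i ∈ s ∧ ¬ n < 2 * #s, patternProb θ s
      < ∑ s : Finset ι with i ∈ s ∧ ¬ n < 2 * #s, patternProb θ sᶜ := by
    refine sum_lt_sum_of_nonempty ⟨{i}, ?_⟩ fun s hs => ?_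
    · simp only [mem_filter, mem_univ, mem_singleton, card_singleton, true_and]
      omega
    · rw [mem_filter] at hs
      exact patternProb_lt_patternProb_compl hθ₁ hθ₂ (by omega)
  have hcomm : ∑ s : Finset ι with i ∈ s ∧ n < 2 * #s, patternProb θ s
      = ∑ s : Finset ι with n < 2 * #s ∧ i ∈ s, patternProb θ s := by
    simp only [and_comm]
  have hvoter :=
    sum_filter_add_sum_filter_not {s : Finset ι | i ∈ s} (n < 2 * #·) (patternProb θ)
  have hmajority :=
    sum_filter_add_sum_filter_not {s : Finset ι | n < 2 * #s} (i ∈ ·) (patternProb θ)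
  simp only [filter_filter] at hvoter hmajority
  linarith

end Weights

section Votes

variable {Ω ι : Type*} [Fintype ι] {X : ι → Ω → ℕ}

def successSet (X : ι → Ω → ℕ) (ω : Ω) : Finset ι := {i | X i ω = 1}

lemma sum_eq_card_successSet (hval : ∀ i ω, X i ω ≤ 1) (ω : Ω) :
    ∑ i, X i ω = #(successSet X ω) := by
  rw [successSet, card_filter]
  refine sum_congr rfl fun i _ => ?_
  have := hval i ω
  split_ifs <;> omega

variable [DecidableEq ι]

lemma successSet_preimage_singleton (hval : ∀ i ω, X i ω ≤ 1) (s : Finset ι) :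
    successSet X ⁻¹' {s} = ⋂ i, X i ⁻¹' {if i ∈ s then 1 else 0} := by
  ext ω
  simp only [Set.mem_preimage, Set.mem_singleton_iff, Set.mem_iInter, Finset.ext_iff,
    successSet, mem_filter, mem_univ, true_and]
  refine forall_congr' fun i => ?_
  have := hval i ω
  split_ifs <;> grind

variable [MeasurableSpace Ω] {μ : Measure Ω} [IsProbabilityMeasure μ] {θ : ℝ}

lemma measure_successSet_preimage_singleton (hmeas : ∀ i, Measurable (X i))
    (hval : ∀ i ω, X i ω ≤ 1) (hindep : iIndepFun X μ)
    (hbern : ∀ i, μ {ω | X i ω = 1} = ENNReal.ofReal θ) (h₀ : 0 ≤ θ) (h₁ : θ ≤ 1)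
    (s : Finset ι) :
    μ (successSet X ⁻¹' {s}) = ENNReal.ofReal (patternProb θ s) := by
  have hzero : ∀ i, μ (X i ⁻¹' {0}) = ENNReal.ofReal (1 - θ) := fun i => by
    have hcompl : X i ⁻¹' {0} = {ω | X i ω = 1}ᶜ := by
      ext ω
      have := hval i ω
      simp only [Set.mem_preimage, Set.mem_singleton_iff, Set.mem_compl_iff, Set.mem_ofPred_eq]
      omega
    have hone : MeasurableSet {ω | X i ω = 1} := hmeas i (measurableSet_singleton 1)
    rw [hcompl, prob_compl_eq_one_sub hone, hbern, ENNReal.ofReal_sub 1 h₀, ENNReal.ofReal_one]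
  rw [successSet_preimage_singleton hval,
    hindep.meas_iInter fun i => ⟨_, measurableSet_singleton _, rfl⟩,
    ← prod_ite_mem_eq_patternProb,
    ENNReal.ofReal_prod_of_nonneg fun i _ => by split_ifs <;> linarith]
  refine prod_congr rfl fun i _ => ?_
  split_ifs
  · exact hbern i
  · exact hzero i

lemma measure_successSet_preimage (hmeas : ∀ i, Measurable (X i))
    (hval : ∀ i ω, X i ω ≤ 1) (hindep : iIndepFun X μ)
    (hbern : ∀ i, μ {ω | X i ω = 1} = ENNReal.ofReal θ) (h₀ : 0 ≤ θ) (h₁ : θ ≤ 1)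
    (S : Finset (Finset ι)) :
    μ (successSet X ⁻¹' S) = ENNReal.ofReal (∑ s ∈ S, patternProb θ s) := by
  have hfiber : ∀ s ∈ S, MeasurableSet (successSet X ⁻¹' {s}) := fun s _ => by
    rw [successSet_preimage_singleton hval]
    exact .iInter fun i => hmeas i (measurableSet_singleton _)
  rw [← sum_measure_preimage_singleton S hfiber,
    ENNReal.ofReal_sum_of_nonneg fun s _ => patternProb_nonneg h₀ h₁ s]
  exact sum_congr rfl fun s _ =>
    measure_successSet_preimage_singleton hmeas hval hindep hbern h₀ h₁ s

end Votes

theorem condorcet_jury_a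
    {Ω : Type*} [MeasurableSpace Ω] (μ : Measure Ω) [IsProbabilityMeasure μ]
    (n : ℕ) (hodd : Odd n) (hn : 3 ≤ n) (θ : ℝ) (hθ1 : 1/2 < θ) (hθ2 : θ < 1)
    (X : Fin n → Ω → ℕ)
    (hmeas : ∀ i, Measurable (X i))
    (hval : ∀ i, ∀ ω, X i ω ≤ 1)
    (hindep : iIndepFun X μ)
    (hbern : ∀ i, μ {ω | X i ω = 1} = ENNReal.ofReal θ) :
    μ {ω | (n : ℝ) / 2 < (∑ i, X i ω : ℕ)} > ENNReal.ofReal θ := by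
  have h₀ : 0 ≤ θ := by linarith
  have h₁ : θ ≤ 1 := hθ2.le
  let i₀ : Fin n := ⟨0, by omega⟩
  have hvoter :
      {ω | X i₀ ω = 1} = successSet X ⁻¹' ↑({s | i₀ ∈ s} : Finset (Finset (Fin n))) := by
    ext ω; simp [successSet]
  have hmajority : {ω | (n : ℝ) / 2 < (∑ i, X i ω : ℕ)}
      = successSet X ⁻¹' ↑({s | n < 2 * #s} : Finset (Finset (Fin n))) := by
    ext ω
    rw [Set.mem_ofPred_eq, sum_eq_card_successSet hval, div_lt_iff₀ two_pos]
    simp only [coe_filter, Set.mem_preimage, Set.mem_ofPred_eq, mem_univ, true_and]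
    norm_cast
    omega
  have hcore := sum_patternProb_mem_lt_sum_patternProb_majority (ι := Fin n)
    (by rwa [Fintype.card_fin]) (by rwa [Fintype.card_fin]) hθ1 hθ2 i₀
  simp only [Fintype.card_fin] at hcore
  rw [gt_iff_lt, ← hbern i₀, hvoter, hmajority,
    measure_successSet_preimage hmeas hval hindep hbern h₀ h₁,
    measure_successSet_preimage hmeas hval hindep hbern h₀ h₁,
    ENNReal.ofReal_lt_ofReal_iff_of_nonneg (sum_nonneg fun s _ => patternProb_nonneg h₀ h₁ s)]
  exact hcore
end

section
/- (Condorcet jury theorem, monotonicity) Let θ ∈ (1/2, 1) and for odd n define Pₙ = ∑_{k > n/2} C(n,k) θᵏ (1−θ)^{n−k}. Then P_{n+2} > Pₙ for every odd n ≥ 1. -/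
/-- Probability that a strict majority of `n` i.i.d. Bernoulli(θ) voters is correct:
`Pₙ(θ) = ∑_{k > n/2} C(n,k) θ^k (1-θ)^(n-k)`. -/
noncomputable def majorityProb (n : ℕ) (θ : ℝ) : ℝ :=
  ∑ k ∈ (Finset.range (n + 1)).filter (fun (k : ℕ) => (n : ℝ) / 2 < (k : ℝ)),
    (n.choose k : ℝ) * θ ^ k * (1 - θ) ^ (n - k)

lemma condorcet_shift (c a b : ℕ) (f : ℕ → ℝ) :
    ∑ j ∈ Finset.Ico a b, f (j + c) = ∑ i ∈ Finset.Ico (a + c) (b + c), f i := by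
  rw [Finset.sum_Ico_eq_sum_range, Finset.sum_Ico_eq_sum_range,
    show b + c - (a + c) = b - a from by omega]
  exact Finset.sum_congr rfl fun i _ => by congr 1; omega

lemma condorcet_filter_eq (m n : ℕ) (h : n = 2*m+1) :
    (Finset.range (n + 1)).filter (fun (k : ℕ) => (n : ℝ) / 2 < (k : ℝ))
      = Finset.Ico (m+1) (n+1) := by
  subst h
  ext k
  simp only [Finset.mem_filter, Finset.mem_range, Finset.mem_Ico]
  constructor
  · rintro ⟨h1, h2⟩
    refine ⟨?_, by omega⟩
    rw [div_lt_iff₀ (by norm_num : (0:ℝ) < 2)] at h2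
    have h3 : ((2*m+1 : ℕ) : ℝ) < ((2*k : ℕ) : ℝ) := by push_cast at h2 ⊢; linarith
    have := Nat.cast_lt.mp h3
    omega
  · rintro ⟨h1, h2⟩
    refine ⟨by omega, ?_⟩
    rw [div_lt_iff₀ (by norm_num : (0:ℝ) < 2)]
    have h3 : ((m:ℝ) + 1) ≤ (k:ℝ) := by exact_mod_cast h1
    push_cast
    linarith

lemma condorcet_key (θ : ℝ) (m : ℕ) :
    ∑ k ∈ Finset.Ico (m+2) (2*m+4), ((2*m+3).choose k : ℝ) * θ^k * (1-θ)^(2*m+3-k)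
    = (∑ k ∈ Finset.Ico (m+1) (2*m+2), ((2*m+1).choose k : ℝ) * θ^k * (1-θ)^(2*m+1-k))
      + ((2*m+1).choose m : ℝ) * θ^(m+1) * (1-θ)^(m+1) * (2*θ - 1) := by
  set P : ℝ := ∑ k ∈ Finset.Ico (m+1) (2*m+2), ((2*m+1).choose k : ℝ) * θ^k * (1-θ)^(2*m+1-k)
    with hP
  have hch : ∀ j, (2*m+3).choose (j+2)
      = (2*m+1).choose j + 2 * (2*m+1).choose (j+1) + (2*m+1).choose (j+2) := by
    intro j
    have e1 : (2*m+3).choose (j+2) = (2*m+2).choose (j+1) + (2*m+2).choose (j+2) := by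
      rw [show 2*m+3 = (2*m+2)+1 from by ring]
      exact Nat.choose_succ_succ _ _
    have e2 : (2*m+2).choose (j+1) = (2*m+1).choose j + (2*m+1).choose (j+1) := by
      rw [show 2*m+2 = (2*m+1)+1 from by ring]
      exact Nat.choose_succ_succ _ _
    have e3 : (2*m+2).choose (j+2) = (2*m+1).choose (j+1) + (2*m+1).choose (j+2) := by
      rw [show 2*m+2 = (2*m+1)+1 from by ring]
      exact Nat.choose_succ_succ _ _
    omega
  -- Step 1: reindex the LHS
  have step1 : ∑ k ∈ Finset.Ico (m+2) (2*m+4), ((2*m+3).choose k : ℝ) * θ^k * (1-θ)^(2*m+3-k)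
      = ∑ j ∈ Finset.Ico m (2*m+2),
          (((2*m+3).choose (j+2) : ℝ) * θ^(j+2) * (1-θ)^(2*m+1-j)) := by
    have h := condorcet_shift 2 m (2*m+2)
      (fun k => ((2*m+3).choose k : ℝ) * θ^k * (1-θ)^(2*m+3-k))
    rw [show 2*m+2+2 = 2*m+4 from by ring] at h
    rw [← h]
    refine Finset.sum_congr rfl fun j hj => ?_
    rw [show 2*m+3-(j+2) = 2*m+1-j from by omega]
  -- Step 2: split each summand using Pascal twice
  have step2 : ∑ j ∈ Finset.Ico m (2*m+2),
          (((2*m+3).choose (j+2) : ℝ) * θ^(j+2) * (1-θ)^(2*m+1-j))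
      = (∑ j ∈ Finset.Ico m (2*m+2), ((2*m+1).choose j : ℝ) * θ^(j+2) * (1-θ)^(2*m+1-j))
        + (∑ j ∈ Finset.Ico m (2*m+2), 2*((2*m+1).choose (j+1) : ℝ) * θ^(j+2) * (1-θ)^(2*m+1-j))
        + (∑ j ∈ Finset.Ico m (2*m+2), ((2*m+1).choose (j+2) : ℝ) * θ^(j+2) * (1-θ)^(2*m+1-j)) := by
    rw [← Finset.sum_add_distrib, ← Finset.sum_add_distrib]
    refine Finset.sum_congr rfl fun j hj => ?_
    rw [hch j]
    push_cast
    ring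
  -- the bottom-peeled sum
  have hbot : ∑ j ∈ Finset.Ico m (2*m+2), ((2*m+1).choose j : ℝ) * θ^j * (1-θ)^(2*m+1-j)
      = ((2*m+1).choose m : ℝ) * θ^m * (1-θ)^(m+1) + P := by
    rw [Finset.sum_eq_sum_Ico_succ_bot (by omega : m < 2*m+2)]
    rw [show 2*m+1-m = m+1 from by omega]
  -- S1
  have hS1 : ∑ j ∈ Finset.Ico m (2*m+2), ((2*m+1).choose j : ℝ) * θ^(j+2) * (1-θ)^(2*m+1-j)
      = (((2*m+1).choose m : ℝ) * θ^m * (1-θ)^(m+1) + P) * θ^2 := by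
    rw [← hbot, Finset.sum_mul]
    refine Finset.sum_congr rfl fun j hj => ?_
    ring
  -- S2
  have hS2 : ∑ j ∈ Finset.Ico m (2*m+2), 2*((2*m+1).choose (j+1) : ℝ) * θ^(j+2) * (1-θ)^(2*m+1-j)
      = P * (2*θ*(1-θ)) := by
    have h := condorcet_shift 1 m (2*m+2)
      (fun i => 2*((2*m+1).choose i : ℝ) * θ^(i+1) * (1-θ)^(2*m+2-i))
    rw [show m+1 = m+1 from rfl, show 2*m+2+1 = 2*m+3 from by ring] at h
    have hl : ∑ j ∈ Finset.Ico m (2*m+2), 2*((2*m+1).choose (j+1) : ℝ) * θ^(j+2) * (1-θ)^(2*m+1-j)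
        = ∑ i ∈ Finset.Ico (m+1) (2*m+3), 2*((2*m+1).choose i : ℝ) * θ^(i+1) * (1-θ)^(2*m+2-i) := by
      rw [← h]
      refine Finset.sum_congr rfl fun j hj => ?_
      rw [show 2*m+2-(j+1) = 2*m+1-j from by omega, show j+1+1 = j+2 from by ring]
    rw [hl, show 2*m+3 = (2*m+2)+1 from by ring,
      Finset.sum_Ico_succ_top (by omega : m+1 ≤ 2*m+2)]
    have htop : 2*((2*m+1).choose (2*m+2) : ℝ) * θ^(2*m+2+1) * (1-θ)^(2*m+2-(2*m+2)) = 0 := by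
      rw [Nat.choose_eq_zero_of_lt (by omega)]
      norm_num
    rw [htop, add_zero, hP, Finset.sum_mul]
    refine Finset.sum_congr rfl fun i hi => ?_
    have hi' := Finset.mem_Ico.mp hi
    rw [show 2*m+2-i = (2*m+1-i)+1 from by omega]
    ring
  -- S3
  have hS3 : ∑ j ∈ Finset.Ico m (2*m+2), ((2*m+1).choose (j+2) : ℝ) * θ^(j+2) * (1-θ)^(2*m+1-j)
      = (P - ((2*m+1).choose (m+1) : ℝ) * θ^(m+1) * (1-θ)^m) * (1-θ)^2 := by
    have h := condorcet_shift 2 m (2*m+2)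
      (fun i => ((2*m+1).choose i : ℝ) * θ^i * (1-θ)^(2*m+3-i))
    have hl : ∑ j ∈ Finset.Ico m (2*m+2), ((2*m+1).choose (j+2) : ℝ) * θ^(j+2) * (1-θ)^(2*m+1-j)
        = ∑ i ∈ Finset.Ico (m+2) (2*m+2+2), ((2*m+1).choose i : ℝ) * θ^i * (1-θ)^(2*m+3-i) := by
      rw [← h]
      refine Finset.sum_congr rfl fun j hj => ?_
      rw [show 2*m+3-(j+2) = 2*m+1-j from by omega]
    rw [hl, show 2*m+2+2 = (2*m+3)+1 from by ring,
      Finset.sum_Ico_succ_top (by omega : m+2 ≤ 2*m+3),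
      show 2*m+3 = (2*m+2)+1 from by ring,
      Finset.sum_Ico_succ_top (by omega : m+2 ≤ 2*m+2)]
    have htop1 : ((2*m+1).choose ((2*m+2)+1) : ℝ) * θ^((2*m+2)+1) * (1-θ)^(2*m+3-((2*m+2)+1)) = 0 := by
      rw [Nat.choose_eq_zero_of_lt (by omega)]
      norm_num
    have htop2 : ((2*m+1).choose (2*m+2) : ℝ) * θ^(2*m+2) * (1-θ)^(2*m+3-(2*m+2)) = 0 := by
      rw [Nat.choose_eq_zero_of_lt (by omega)]
      norm_num
    rw [htop1, htop2, add_zero, add_zero]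
    have hmid : P = ((2*m+1).choose (m+1) : ℝ) * θ^(m+1) * (1-θ)^m
        + ∑ i ∈ Finset.Ico (m+2) (2*m+2), ((2*m+1).choose i : ℝ) * θ^i * (1-θ)^(2*m+1-i) := by
      rw [hP, Finset.sum_eq_sum_Ico_succ_bot (by omega : m+1 < 2*m+2),
        show 2*m+1-(m+1) = m from by omega]
    have : (P - ((2*m+1).choose (m+1) : ℝ) * θ^(m+1) * (1-θ)^m)
        = ∑ i ∈ Finset.Ico (m+2) (2*m+2), ((2*m+1).choose i : ℝ) * θ^i * (1-θ)^(2*m+1-i) := by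
      rw [hmid]; ring
    rw [this, Finset.sum_mul]
    refine Finset.sum_congr rfl fun i hi => ?_
    have hi' := Finset.mem_Ico.mp hi
    rw [show 2*m+3-i = (2*m+1-i)+2 from by omega]
    ring
  rw [step1, step2, hS1, hS2, hS3,
    show (2*m+1).choose (m+1) = (2*m+1).choose m from by
      rw [show m+1 = 2*m+1-m from by omega]; exact Nat.choose_symm (by omega)]
  ring

theorem condorcet_monotone (θ : ℝ) (hθ : θ ∈ Set.Ioo (1/2 : ℝ) 1)
    (n : ℕ) (hodd : Odd n) (hn : 1 ≤ n) :
    majorityProb (n + 2) θ > majorityProb n θ := by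
  obtain ⟨m, hm⟩ := hodd
  subst hm
  have h1 : majorityProb (2*m+1) θ
      = ∑ k ∈ Finset.Ico (m+1) (2*m+2), ((2*m+1).choose k : ℝ) * θ^k * (1-θ)^(2*m+1-k) := by
    unfold majorityProb
    rw [condorcet_filter_eq m (2*m+1) rfl, show 2*m+1+1 = 2*m+2 from by ring]
  have h2 : majorityProb (2*m+1+2) θ
      = ∑ k ∈ Finset.Ico (m+2) (2*m+4), ((2*m+3).choose k : ℝ) * θ^k * (1-θ)^(2*m+3-k) := by
    unfold majorityProb
    rw [condorcet_filter_eq (m+1) (2*m+1+2) (by ring)]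
  rw [h1, h2, condorcet_key θ m]
  have hθ1 := hθ.1
  have hθ2 := hθ.2
  have hθ0 : 0 < θ := by linarith
  have hC : 0 < ((2*m+1).choose m : ℝ) := by
    exact_mod_cast Nat.choose_pos (by omega : m ≤ 2*m+1)
  have hp1 : 0 < θ^(m+1) := pow_pos hθ0 _
  have hp2 : 0 < (1-θ)^(m+1) := pow_pos (by linarith) _
  have hp3 : 0 < 2*θ - 1 := by linarith
  have := mul_pos (mul_pos (mul_pos hC hp1) hp2) hp3
  linarith
end

section
/- (Condorcet jury theorem, convergence) Let θ ∈ (1/2, 1) and for odd n let Pₙ = ∑_{k > n/2} C(n,k) θᵏ (1−θ)^{n−k}. Then Pₙ → 1 as n → ∞. -/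
lemma binom_total (n : ℕ) (θ : ℝ) :
    ∑ k ∈ Finset.range (n + 1), (n.choose k : ℝ) * θ ^ k * (1 - θ) ^ (n - k) = 1 := by
  have h := add_pow θ (1 - θ) n
  simp only [add_sub_cancel, one_pow] at h
  calc ∑ k ∈ Finset.range (n + 1), (n.choose k : ℝ) * θ ^ k * (1 - θ) ^ (n - k)
      = ∑ k ∈ Finset.range (n + 1), θ ^ k * (1 - θ) ^ (n - k) * (n.choose k : ℝ) := by
        apply Finset.sum_congr rfl; intro k _; ring
    _ = 1 := h.symm

lemma majority_eq (n : ℕ) (θ : ℝ) :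
    majorityProb n θ = 1 -
      ∑ k ∈ (Finset.range (n + 1)).filter (fun (k : ℕ) => ¬ ((n : ℝ) / 2 < (k : ℝ))),
        (n.choose k : ℝ) * θ ^ k * (1 - θ) ^ (n - k) := by
  have h := Finset.sum_filter_add_sum_filter_not (Finset.range (n + 1))
    (fun (k : ℕ) => (n : ℝ) / 2 < (k : ℝ))
    (fun k => (n.choose k : ℝ) * θ ^ k * (1 - θ) ^ (n - k))
  rw [binom_total] at h
  unfold majorityProb
  linarith

theorem condorcet_tendsto_one (θ : ℝ) (hθ : θ ∈ Set.Ioo (1/2 : ℝ) 1) :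
    Filter.Tendsto (fun m : ℕ => majorityProb (2 * m + 1) θ) Filter.atTop (nhds 1) := by
  obtain ⟨hθ1, hθ2⟩ := hθ
  have hθ0 : 0 < θ := by linarith
  have h1θ : 0 ≤ 1 - θ := by linarith
  set Q : ℕ → ℝ := fun m =>
    ∑ k ∈ (Finset.range (2 * m + 1 + 1)).filter
        (fun (k : ℕ) => ¬ (((2 * m + 1 : ℕ) : ℝ) / 2 < (k : ℝ))),
      ((2 * m + 1).choose k : ℝ) * θ ^ k * (1 - θ) ^ (2 * m + 1 - k) with hQ
  have hP : (fun m : ℕ => majorityProb (2 * m + 1) θ) = fun m => 1 - Q m := by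
    funext m; exact majority_eq (2 * m + 1) θ
  rw [hP]
  have hQ0 : ∀ m, 0 ≤ Q m := by
    intro m
    apply Finset.sum_nonneg
    intro k _
    positivity
  have hbound : ∀ m, Q m ≤ 2 * (1 - θ) * (4 * θ * (1 - θ)) ^ m := by
    intro m
    have step1 : Q m ≤ ∑ k ∈ (Finset.range (2 * m + 1 + 1)).filter
        (fun (k : ℕ) => ¬ (((2 * m + 1 : ℕ) : ℝ) / 2 < (k : ℝ))),
        ((2 * m + 1).choose k : ℝ) * (θ ^ m * (1 - θ) ^ (m + 1)) := by
      apply Finset.sum_le_sum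
      intro k hk
      simp only [Finset.mem_filter, Finset.mem_range, not_lt] at hk
      obtain ⟨-, hkm⟩ := hk
      have hkm' : k ≤ m := by
        by_contra h
        push_neg at h
        have : (m : ℝ) + 1 ≤ (k : ℝ) := by exact_mod_cast h
        push_cast at hkm
        linarith
      have hsub : 2 * m + 1 - k = (m + 1) + (m - k) := by omega
      rw [hsub, pow_add, mul_assoc]
      have key : θ ^ k * ((1 - θ) ^ (m + 1) * (1 - θ) ^ (m - k)) ≤ θ ^ m * (1 - θ) ^ (m + 1) := by
        have h1 : θ ^ k * (1 - θ) ^ (m - k) ≤ θ ^ m := by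
          calc θ ^ k * (1 - θ) ^ (m - k) ≤ θ ^ k * θ ^ (m - k) := by
                apply mul_le_mul_of_nonneg_left _ (by positivity)
                exact pow_le_pow_left₀ h1θ (by linarith) _
            _ = θ ^ m := by rw [← pow_add]; congr 1; omega
        calc θ ^ k * ((1 - θ) ^ (m + 1) * (1 - θ) ^ (m - k))
            = (θ ^ k * (1 - θ) ^ (m - k)) * (1 - θ) ^ (m + 1) := by ring
          _ ≤ θ ^ m * (1 - θ) ^ (m + 1) := by
              apply mul_le_mul_of_nonneg_right h1 (by positivity)
      exact mul_le_mul_of_nonneg_left key (by positivity)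
    have step2 : ∑ k ∈ (Finset.range (2 * m + 1 + 1)).filter
        (fun (k : ℕ) => ¬ (((2 * m + 1 : ℕ) : ℝ) / 2 < (k : ℝ))),
        ((2 * m + 1).choose k : ℝ) * (θ ^ m * (1 - θ) ^ (m + 1))
        ≤ (2 : ℝ) ^ (2 * m + 1) * (θ ^ m * (1 - θ) ^ (m + 1)) := by
      rw [← Finset.sum_mul]
      apply mul_le_mul_of_nonneg_right _ (by positivity)
      have h1 : ∑ k ∈ (Finset.range (2 * m + 1 + 1)).filter
          (fun (k : ℕ) => ¬ (((2 * m + 1 : ℕ) : ℝ) / 2 < (k : ℝ))),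
          ((2 * m + 1).choose k : ℝ)
          ≤ ∑ k ∈ Finset.range (2 * m + 1 + 1), ((2 * m + 1).choose k : ℝ) := by
        apply Finset.sum_le_sum_of_subset_of_nonneg (Finset.filter_subset _ _)
        intro k _ _; positivity
      have h2 : ∑ k ∈ Finset.range (2 * m + 1 + 1), ((2 * m + 1).choose k : ℝ)
          = (2 : ℝ) ^ (2 * m + 1) := by
        rw [← Nat.cast_sum]
        rw [Nat.sum_range_choose]
        push_cast
        ring
      linarith
    have heq : (2 : ℝ) ^ (2 * m + 1) * (θ ^ m * (1 - θ) ^ (m + 1))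
        = 2 * (1 - θ) * (4 * θ * (1 - θ)) ^ m := by
      rw [show (4:ℝ) * θ * (1 - θ) = 2^2 * (θ * (1-θ)) by ring, mul_pow, ← pow_mul, mul_pow θ (1 - θ) m]
      rw [pow_add]
      ring
    linarith
  have hr0 : 0 ≤ 4 * θ * (1 - θ) := by positivity
  have hr1 : 4 * θ * (1 - θ) < 1 := by nlinarith
  have hQtend : Filter.Tendsto Q Filter.atTop (nhds 0) := by
    apply squeeze_zero hQ0 hbound
    have := tendsto_pow_atTop_nhds_zero_of_lt_one hr0 hr1
    have h := this.const_mul (2 * (1 - θ))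
    simpa using h
  simpa using hQtend.const_sub 1
end

section
/- (Condorcet jury theorem, incompetent jurors) Let θ ∈ (0, 1/2) and for odd n let Pₙ = ∑_{k > n/2} C(n,k) θᵏ (1−θ)^{n−k}. Then Pₙ → 0 as n → ∞. -/
theorem condorcet_tendsto_zero (θ : ℝ) (hθ : θ ∈ Set.Ioo (0 : ℝ) (1/2)) :
    Filter.Tendsto (fun m : ℕ => majorityProb (2 * m + 1) θ) Filter.atTop (nhds 0) := by
  obtain ⟨hθ0, hθ2⟩ := hθ
  have hθ1 : θ < 1 := by linarith
  have h1θ : (0:ℝ) < 1 - θ := by linarith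
  have hθle : θ ≤ 1 - θ := by linarith
  set c : ℝ := 4 * θ * (1 - θ) with hc
  have hc0 : 0 ≤ c := by positivity
  have hc1 : c < 1 := by nlinarith [sq_nonneg (1 - 2*θ)]
  have hg : Filter.Tendsto (fun m : ℕ => 2 * θ * c ^ m) Filter.atTop (nhds 0) := by
    have := tendsto_pow_atTop_nhds_zero_of_lt_one hc0 hc1
    simpa using this.const_mul (2 * θ)
  apply squeeze_zero (g := fun m : ℕ => 2 * θ * c ^ m) _ _ hg
  · intro m
    apply Finset.sum_nonneg
    intro k _
    positivity
  · intro m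
    set n := 2 * m + 1 with hn
    have hB : (0:ℝ) ≤ θ ^ (m+1) * (1 - θ) ^ m := by positivity
    have step1 : majorityProb n θ ≤
        ∑ k ∈ (Finset.range (n + 1)).filter (fun k : ℕ => (n : ℝ) / 2 < (k : ℝ)),
          (n.choose k : ℝ) * (θ ^ (m+1) * (1 - θ) ^ m) := by
      apply Finset.sum_le_sum
      intro k hk
      rw [Finset.mem_filter, Finset.mem_range] at hk
      obtain ⟨hkn, hkg⟩ := hk
      have hkn' : k ≤ n := by omega
      have hk1 : m + 1 ≤ k := by
        have : (n : ℝ) < 2 * k := by linarith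
        have : n < 2 * k := by exact_mod_cast this
        omega
      have hsplit : k = (m + 1) + (k - (m+1)) := by omega
      have hsum : (k - (m+1)) + (n - k) = m := by omega
      have h1 : θ ^ k * (1 - θ) ^ (n - k) ≤ θ ^ (m+1) * (1 - θ) ^ m := by
        calc θ ^ k * (1 - θ) ^ (n - k)
            = θ ^ (m+1) * (θ ^ (k - (m+1)) * (1 - θ) ^ (n - k)) := by
              nth_rewrite 1 [hsplit]; rw [pow_add]; ring
          _ ≤ θ ^ (m+1) * ((1 - θ) ^ (k - (m+1)) * (1 - θ) ^ (n - k)) := by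
              apply mul_le_mul_of_nonneg_left _ (by positivity)
              apply mul_le_mul_of_nonneg_right _ (by positivity)
              exact pow_le_pow_left₀ hθ0.le hθle _
          _ = θ ^ (m+1) * (1 - θ) ^ m := by rw [← pow_add, hsum]
      calc (n.choose k : ℝ) * θ ^ k * (1 - θ) ^ (n - k)
          = (n.choose k : ℝ) * (θ ^ k * (1 - θ) ^ (n - k)) := by ring
        _ ≤ (n.choose k : ℝ) * (θ ^ (m+1) * (1 - θ) ^ m) := by
            exact mul_le_mul_of_nonneg_left h1 (by positivity)
    have step2 : ∑ k ∈ (Finset.range (n + 1)).filter (fun k : ℕ => (n : ℝ) / 2 < (k : ℝ)),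
          (n.choose k : ℝ) * (θ ^ (m+1) * (1 - θ) ^ m) ≤
        ∑ k ∈ Finset.range (n + 1), (n.choose k : ℝ) * (θ ^ (m+1) * (1 - θ) ^ m) := by
      apply Finset.sum_le_sum_of_subset_of_nonneg (Finset.filter_subset _ _)
      intro k _ _
      positivity
    have step3 : ∑ k ∈ Finset.range (n + 1), (n.choose k : ℝ) * (θ ^ (m+1) * (1 - θ) ^ m)
        = 2 * θ * c ^ m := by
      rw [← Finset.sum_mul]
      have : ∑ k ∈ Finset.range (n + 1), (n.choose k : ℝ) = 2 ^ n := by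
        exact_mod_cast congrArg (Nat.cast : ℕ → ℝ) (Nat.sum_range_choose n)
      rw [this, hn, hc]
      rw [show (4:ℝ) * θ * (1 - θ) = (2:ℝ)^2 * (θ * (1-θ)) by ring, mul_pow,
        ← pow_mul, pow_add, mul_pow]
      ring
    calc majorityProb n θ ≤ _ := step1
      _ ≤ _ := step2
      _ = 2 * θ * c ^ m := step3
end

section
/- Let θ ∈ (1/2, 1) and n be odd. Then the majority probability of n+2 voters relates to that of n voters by P_{n+2} − Pₙ = C(n, (n+1)/2) θ^{(n+1)/2} (1−θ)^{(n+1)/2} (2θ − 1), and in particular this difference is positive. -/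
lemma maj_eq (N : ℕ) (θ : ℝ) :
    majorityProb N θ = ∑ i ∈ Finset.range (N + 1 - (N/2+1)),
      (N.choose (N/2+1+i) : ℝ) * θ ^ (N/2+1+i) * (1 - θ) ^ (N - (N/2+1+i)) := by
  unfold majorityProb
  have hset : (Finset.range (N+1)).filter (fun (k : ℕ) => (N : ℝ) / 2 < (k : ℝ))
      = Finset.Ico (N/2+1) (N+1) := by
    ext k
    simp only [Finset.mem_filter, Finset.mem_range, Finset.mem_Ico]
    have h2 : ((N : ℝ) / 2 < (k : ℝ)) ↔ (N < 2 * k) := by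
      rw [div_lt_iff₀ (by norm_num : (0:ℝ) < 2)]
      constructor <;> intro h
      · have : (N:ℝ) < 2*(k:ℝ) := by linarith
        exact_mod_cast this
      · push_cast
        have : (N:ℝ) < 2*(k:ℝ) := by exact_mod_cast h
        linarith
    rw [h2]
    omega
  rw [hset, Finset.sum_Ico_eq_sum_range]

theorem majorityProb_recurrence (θ : ℝ) (hθ : θ ∈ Set.Ioo (1/2 : ℝ) 1)
    (n : ℕ) (hodd : Odd n) :
    majorityProb (n + 2) θ - majorityProb n θ =
      (n.choose ((n + 1) / 2) : ℝ) * θ ^ ((n + 1) / 2) * (1 - θ) ^ ((n + 1) / 2) * (2 * θ - 1) ∧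
    0 < majorityProb (n + 2) θ - majorityProb n θ := by
  obtain ⟨m, hm⟩ := hodd
  subst hm
  obtain ⟨hθ1, hθ2⟩ := hθ
  set f : ℕ → ℝ := fun k => ((2*m+1).choose k : ℝ) * θ ^ k * (1 - θ) ^ (2*m+1 - k) with hf
  have hPn : majorityProb (2*m+1) θ = ∑ i ∈ Finset.range (m+1), f (m+1+i) := by
    rw [maj_eq, show (2*m+1)/2 + 1 = m+1 from by omega,
      show 2*m+1+1 - (m+1) = m+1 from by omega]
  have hPn2 : majorityProb (2*m+1+2) θ = ∑ i ∈ Finset.range (m+2),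
      (((2*m+3).choose (m+2+i) : ℝ) * θ ^ (m+2+i) * (1 - θ) ^ (m+1-i)) := by
    rw [show 2*m+1+2 = 2*m+3 from by omega, maj_eq,
      show (2*m+3)/2 + 1 = m+2 from by omega,
      show 2*m+3+1 - (m+2) = m+2 from by omega]
    apply Finset.sum_congr rfl
    intro i hi
    rw [show 2*m+3 - (m+2+i) = m+1-i from by omega]
  have hchoose : ∀ i : ℕ, ((2*m+3).choose (m+2+i) : ℝ) =
      ((2*m+1).choose (m+i) : ℝ) + 2 * ((2*m+1).choose (m+1+i)) + ((2*m+1).choose (m+2+i)) := by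
    intro i
    have e1 : (2*m+3).choose (m+2+i) = (2*m+2).choose (m+1+i) + (2*m+2).choose (m+2+i) := by
      rw [show m+2+i = (m+1+i) + 1 from by omega, show 2*m+3 = (2*m+2)+1 from by omega,
        Nat.choose_succ_succ, Nat.succ_eq_add_one, show m+1+i+1 = m+2+i from by omega]
    have e2 : (2*m+2).choose (m+1+i) = (2*m+1).choose (m+i) + (2*m+1).choose (m+1+i) := by
      rw [show m+1+i = (m+i) + 1 from by omega, show 2*m+2 = (2*m+1)+1 from by omega,
        Nat.choose_succ_succ, Nat.succ_eq_add_one, show m+i+1 = m+1+i from by omega]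
    have e3 : (2*m+2).choose (m+2+i) = (2*m+1).choose (m+1+i) + (2*m+1).choose (m+2+i) := by
      rw [show m+2+i = (m+1+i) + 1 from by omega, show 2*m+2 = (2*m+1)+1 from by omega,
        Nat.choose_succ_succ, Nat.succ_eq_add_one, show m+1+i+1 = m+2+i from by omega]
    rw [e1, e2, e3]
    push_cast
    ring
  set P := majorityProb (2*m+1) θ with hP
  have hsplit : majorityProb (2*m+1+2) θ =
      (∑ i ∈ Finset.range (m+2), ((2*m+1).choose (m+i) : ℝ) * θ ^ (m+2+i) * (1-θ)^(m+1-i))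
      + 2 * (∑ i ∈ Finset.range (m+2), ((2*m+1).choose (m+1+i) : ℝ) * θ ^ (m+2+i) * (1-θ)^(m+1-i))
      + (∑ i ∈ Finset.range (m+2), ((2*m+1).choose (m+2+i) : ℝ) * θ ^ (m+2+i) * (1-θ)^(m+1-i)) := by
    rw [hPn2, Finset.mul_sum, ← Finset.sum_add_distrib, ← Finset.sum_add_distrib]
    apply Finset.sum_congr rfl
    intro i _
    rw [hchoose i]
    ring
  -- A = θ^2 * (f m + P)
  have hAval : (∑ i ∈ Finset.range (m+2), ((2*m+1).choose (m+i) : ℝ) * θ ^ (m+2+i) * (1-θ)^(m+1-i))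
      = θ^2 * (f m + P) := by
    rw [Finset.sum_range_succ' _ (m+1), hPn, mul_add, Finset.mul_sum]
    simp only [hf]
    rw [show 2*m+1-m = m+1 from by omega]
    rw [add_comm]
    congr 1
    · push_cast; ring_nf
    · apply Finset.sum_congr rfl
      intro i hi
      simp only [Finset.mem_range] at hi
      rw [show m+(i+1) = m+1+i from by omega, show m+2+(i+1) = (m+1+i)+2 from by omega,
        show m+1-(i+1) = m-i from by omega, show 2*m+1-(m+1+i) = m-i from by omega]
      ring
  -- B = θ(1-θ) * P
  have hBval : (∑ i ∈ Finset.range (m+2), ((2*m+1).choose (m+1+i) : ℝ) * θ ^ (m+2+i) * (1-θ)^(m+1-i))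
      = θ*(1-θ) * P := by
    rw [Finset.sum_range_succ]
    have hz : ((2*m+1).choose (m+1+(m+1)) : ℝ) = 0 := by
      rw [Nat.choose_eq_zero_of_lt (by omega)]; norm_num
    rw [hz, hPn, Finset.mul_sum]
    simp only [hf]
    rw [zero_mul, zero_mul, add_zero]
    apply Finset.sum_congr rfl
    intro i hi
    simp only [Finset.mem_range] at hi
    rw [show m+2+i = (m+1+i)+1 from by omega, show 2*m+1-(m+1+i) = m-i from by omega,
      show m+1-i = (m-i)+1 from by omega]
    ring
  -- C = (1-θ)^2 * (P - f (m+1))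
  have hCval : (∑ i ∈ Finset.range (m+2), ((2*m+1).choose (m+2+i) : ℝ) * θ ^ (m+2+i) * (1-θ)^(m+1-i))
      = (1-θ)^2 * (P - f (m+1)) := by
    rw [Finset.sum_range_succ, Finset.sum_range_succ]
    have hz1 : ((2*m+1).choose (m+2+(m+1)) : ℝ) = 0 := by
      rw [Nat.choose_eq_zero_of_lt (by omega)]; norm_num
    have hz2 : ((2*m+1).choose (m+2+m) : ℝ) = 0 := by
      rw [Nat.choose_eq_zero_of_lt (by omega)]; norm_num
    rw [hz1, hz2, zero_mul, zero_mul, zero_mul, zero_mul, add_zero, add_zero]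
    have hPsplit : P = f (m+1) + ∑ i ∈ Finset.range m, f (m+2+i) := by
      rw [hPn, Finset.sum_range_succ' _ m]
      rw [add_comm]
      congr 1
      apply Finset.sum_congr rfl
      intro i hi
      rw [show m+1+(i+1) = m+2+i from by omega]
    rw [hPsplit, add_sub_cancel_left, Finset.mul_sum]
    apply Finset.sum_congr rfl
    intro i hi
    simp only [Finset.mem_range] at hi
    simp only [hf]
    rw [show 2*m+1-(m+2+i) = m-1-i from by omega, show m+1-i = (m-1-i)+2 from by omega]
    ring
  have key : majorityProb (2*m+1+2) θ - P =
      ((2*m+1).choose (m+1) : ℝ) * θ^(m+1) * (1-θ)^(m+1) * (2*θ-1) := by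
    rw [hsplit, hAval, hBval, hCval]
    have hsym : ((2*m+1).choose m : ℝ) = ((2*m+1).choose (m+1) : ℝ) := by
      have := Nat.choose_symm (show m+1 ≤ 2*m+1 from by omega)
      rw [show 2*m+1-(m+1) = m from by omega] at this
      exact_mod_cast this
    simp only [hf]
    rw [show 2*m+1-m = m+1 from by omega, show 2*m+1-(m+1) = m from by omega, hsym]
    ring
  have hhalf : (2*m+1+1)/2 = m+1 := by omega
  rw [hhalf] at *
  constructor
  · rw [key]
  · rw [key]
    have h1 : (0:ℝ) < ((2*m+1).choose (m+1) : ℝ) := by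
      exact_mod_cast Nat.choose_pos (show m+1 ≤ 2*m+1 from by omega)
    have h2 : (0:ℝ) < θ := by linarith
    have h3 : (0:ℝ) < 1-θ := by linarith
    have h4 : (0:ℝ) < 2*θ-1 := by linarith
    positivity
end
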